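/- arXiv:2211.03292 — 5 statements merged into one kernel-verified Lean document; each statement's English description precedes it below -/
import Mathlib

section
/- For every m in [n/2, 2n] (with appropriate divisibility), there exists a set S of at most 2 binary strings of length m such that for every binary string x of length n, some s in S has |LCS(s, x)| >= (n+m)/3. -/
/-!
Write `n + m = 3k`, so `n = 2c + e` and `m = c + 2e` with `c = n - k`, `e = m - k`.
Take the two strings `bᶜ (b b̄)ᵉ` for `b ∈ {0, 1}`. Split `x` into its first `2c` letters and
its last `e` letters: the first block contains `c` copies of some letter `b`, and each of the
last `e` letters occurs in the corresponding pair `b b̄`. This gives a common subsequence of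
length `c + e = k` with one of the two strings.
-/

/-- Length of a longest common subsequence of two binary strings. -/
noncomputable def lcsLen (x y : List Bool) : ℕ :=
  sSup {n | ∃ s : List Bool, s.length = n ∧ s.Sublist x ∧ s.Sublist y}

open List

lemma length_le_lcsLen {s x y : List Bool} (hs : y <+ s) (hx : y <+ x) :
    y.length ≤ lcsLen s x :=
  le_csSup ⟨s.length, by rintro n ⟨t, rfl, hts, -⟩; exact hts.length_le⟩ ⟨y, rfl, hs, hx⟩

lemma exists_replicate_sublist {u : List Bool} {c : ℕ} (hu : 2 * c ≤ u.length) :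
    ∃ b, replicate c b <+ u := by
  have := count_true_add_count_false u
  by_cases h : c ≤ u.count true
  · exact ⟨true, replicate_sublist_iff.mpr h⟩
  · exact ⟨false, replicate_sublist_iff.mpr (by omega)⟩

lemma sublist_flatten_replicate_pair (b : Bool) (v : List Bool) :
    v <+ (replicate v.length [b, !b]).flatten := by
  induction v with
  | nil => simp
  | cons a v ih =>
    have ha : [a] <+ [b, !b] := by cases a <;> cases b <;> decide
    simpa only [length_cons, replicate_succ, flatten_cons, singleton_append] using ha.append ih

def altString (b : Bool) (c e : ℕ) : List Bool :=
  replicate c b ++ (replicate e [b, !b]).flatten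

@[simp]
lemma length_altString (b : Bool) (c e : ℕ) : (altString b c e).length = c + 2 * e := by
  simp [altString, Nat.mul_comm]

lemma exists_lcsLen_altString_ge {c e : ℕ} {x : List Bool} (hx : x.length = 2 * c + e) :
    ∃ b, c + e ≤ lcsLen (altString b c e) x := by
  obtain ⟨b, hb⟩ := exists_replicate_sublist (u := x.take (2 * c)) (c := c) (by rw [length_take]; omega)
  have hdrop : (x.drop (2 * c)).length = e := by rw [length_drop]; omega
  refine ⟨b, ?_⟩
  calc c + e = (replicate c b ++ x.drop (2 * c)).length := by simp [hdrop]
    _ ≤ lcsLen (altString b c e) x := by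
      refine length_le_lcsLen ((Sublist.refl _).append ?_) ?_
      · simpa only [hdrop] using sublist_flatten_replicate_pair b (x.drop (2 * c))
      · simpa only [take_append_drop] using hb.append (Sublist.refl (x.drop (2 * c)))

theorem stmt0 (n m : ℕ) (h1 : n ≤ 2 * m) (h2 : m ≤ 2 * n) (h3 : 3 ∣ n + m) :
    ∃ S : Finset (List Bool), S.card ≤ 2 ∧ (∀ s ∈ S, s.length = m) ∧
      ∀ x : List Bool, x.length = n → ∃ s ∈ S, (n + m) / 3 ≤ lcsLen s x := by
  obtain ⟨k, hk⟩ := h3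
  refine ⟨Finset.univ.image fun b => altString b (n - k) (m - k), ?_, ?_, ?_⟩
  · exact Finset.card_image_le.trans (by simp)
  · simp only [Finset.mem_image, Finset.mem_univ, true_and, forall_exists_index,
      forall_apply_eq_imp_iff, length_altString]
    omega
  · intro x hx
    obtain ⟨b, hb⟩ := exists_lcsLen_altString_ge (c := n - k) (e := m - k) (x := x) (by omega)
    exact ⟨_, Finset.mem_image_of_mem _ (Finset.mem_univ b), by omega⟩
end

section
/- If a binary string x of length n contains t disjoint occurrences of the pattern 01 (as subsequences in disjoint position pairs), then for every m >= n - t, |LCS(x, (01)^m)| = n, i.e., x is a subsequence of (01)^m. -/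
open List

lemma lcsLen_eq_length_of_sublist {x y : List Bool} (h : x <+ y) : lcsLen x y = x.length := by
  have hmem : x.length ∈ {n | ∃ s : List Bool, s.length = n ∧ s <+ x ∧ s <+ y} :=
    ⟨x, rfl, List.Sublist.refl x, h⟩
  have hle : ∀ n ∈ {n | ∃ s : List Bool, s.length = n ∧ s <+ x ∧ s <+ y},
      n ≤ x.length := by
    rintro n ⟨s, rfl, hs, -⟩
    exact hs.length_le
  exact le_antisymm (csSup_le ⟨_, hmem⟩ hle) (le_csSup ⟨_, hle⟩ hmem)

def alternating : Bool → ℕ → List Bool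
  | _, 0 => []
  | b, k + 1 => b :: alternating (!b) k

@[simp]
lemma alternating_zero (b : Bool) : alternating b 0 = [] := rfl

@[simp]
lemma alternating_succ (b : Bool) (k : ℕ) : alternating b (k + 1) = b :: alternating (!b) k := rfl

@[simp]
lemma alternating_length (b : Bool) (k : ℕ) : (alternating b k).length = k := by
  induction k generalizing b <;> simp [*]

lemma alternating_add_two (b : Bool) (k : ℕ) :
    alternating b (k + 2) = b :: (!b) :: alternating b k := by
  simp

lemma flatten_replicate_eq_alternating (m : ℕ) :
    (List.replicate m [false, true]).flatten = alternating false (2 * m) := by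
  induction m with
  | zero => rfl
  | succ m ih =>
    rw [List.replicate_succ, List.flatten_cons, ih, Nat.mul_succ, alternating_add_two]
    rfl

lemma alternating_prefix_of_le (b : Bool) {k l : ℕ} (h : k ≤ l) :
    alternating b k <+: alternating b l := by
  induction k generalizing b l with
  | zero => exact List.nil_prefix
  | succ k ih =>
    obtain ⟨l, rfl⟩ := Nat.exists_eq_add_of_lt h
    simpa using ih (!b) (by omega)

lemma cons_sublist_cons_not_cons {x l : List Bool} (c b : Bool) (h : x <+ l) :
    c :: x <+ b :: (!b) :: l := by
  cases c <;> cases b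
  exacts [(h.cons _).cons_cons _, (h.cons_cons _).cons _,
    (h.cons_cons _).cons _, (h.cons _).cons_cons _]

theorem sublist_alternating_of_alternating_sublist {b : Bool} {k : ℕ} {x : List Bool}
    (h : alternating b k <+ x) : x <+ alternating b (2 * x.length - k) := by
  induction x generalizing b k with
  | nil => exact List.nil_sublist _
  | cons c x ih =>
    rcases List.sublist_cons_iff.1 h with hx | ⟨r, hr, hrx⟩
    · have hk : k ≤ x.length := by simpa using hx.length_le
      rw [List.length_cons, show 2 * (x.length + 1) - k = 2 * x.length - k + 2 by omega,
        alternating_add_two]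
      exact cons_sublist_cons_not_cons c b (ih hx)
    · obtain ⟨k, rfl⟩ : ∃ k', k = k' + 1 :=
        Nat.exists_eq_succ_of_ne_zero (by rintro rfl; simp at hr)
      obtain ⟨rfl, rfl⟩ := List.cons_eq_cons.1 hr
      have hk : k ≤ x.length := by simpa using hrx.length_le
      rw [List.length_cons, show 2 * (x.length + 1) - (k + 1) = 2 * x.length - k + 1 by omega,
        alternating_succ]
      exact (ih hrx).cons_cons _

/-- If `x` contains `t` disjoint occurrences of the pattern `01` (equivalently,
`(01)^t` is a subsequence of `x`), then for every `m ≥ n - t`, `x` is a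
subsequence of `(01)^m` and hence `|LCS(x, (01)^m)| = n` where `n = |x|`. -/
theorem stmt3 (t : ℕ) (x : List Bool)
    (h : ((List.replicate t [false, true]).flatten).Sublist x) :
    ∀ m : ℕ, x.length - t ≤ m →
      x.Sublist ((List.replicate m [false, true]).flatten) ∧
      lcsLen x ((List.replicate m [false, true]).flatten) = x.length := by
  intro m hm
  rw [flatten_replicate_eq_alternating] at h ⊢
  have hx : x <+ alternating false (2 * m) := by
    have := sublist_alternating_of_alternating_sublist h
    rw [show 2 * x.length - 2 * t = 2 * (x.length - t) by omega] at this
    exact this.trans (alternating_prefix_of_le false (by omega)).sublist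
  exact ⟨hx, lcsLen_eq_length_of_sublist hx⟩
end

section
/- Fix k >= 1 and a pattern y in {0,1}^k. For the string x^(t) = (0^t 1^t)^{l/(2t)} of length l (where 2t divides l), the k-deck count K_k(x^(t))_y, viewed as a function of t, is a polynomial in t of degree at most k-1 with coefficients that are polynomial functions of l; i.e., K_k(x^(t))_y = sum_{i=0}^{k-1} t^i * f_{y,i}(l) for some polynomials f_{y,i}. -/
/-!
Cut `x^(t)` into its `M = l / (2t)` blocks `0^t 1^t` and let `F_w(t, M)` count the occurrences of
a word `w` as a subsequence. Splitting an occurrence at the end of the first block gives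
`F_w(t, M + 1) - F_w(t, M) = ∑_{j ≥ 1} e_{w[:j]}(t) F_{w[j:]}(t, M)`, where `e_z(t)`, the count in
a single block, is a product of two binomial coefficients in `t`: a polynomial of degree `≤ |z|`
vanishing at `t = 0`. By induction on `|w|`, `F_w` is a linear combination of `t^i (tM)^a` with
`i + a ≤ |w|`: multiplying by `e_z` raises the exponent of `t` by at least one, and Faulhaber's
formula turns `∑_{m < M} t^i (tm)^a` with `i ≥ 1` into a combination of `t^i' (tM)^a'` with
`a' ≥ 1` and `i' + a' = i + a`. As `tM = l / 2` and `a ≥ 1`, the exponent of `t` is at most `k - 1`.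
-/

/-- The `y`-entry of the `k`-deck of a string `x`. -/
def deck (k : ℕ) (x : List Bool) (y : Fin k → Bool) : ℕ :=
  (Finset.univ.filter fun f : Fin k → Fin x.length =>
      (∀ i j : Fin k, i < j → f i < f j) ∧ ∀ j, x.get (f j) = y j).card

/-- The periodic string `x^(t) = (0^t 1^t)^{l/(2t)}` of length `l` (when `2t ∣ l`). -/
def xt (l t : ℕ) : List Bool :=
  (List.replicate (l / (2 * t)) (List.replicate t false ++ List.replicate t true)).flatten

namespace List

variable {α : Type*} [DecidableEq α]

def subseqCount : List α → List α → ℕ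
  | _, [] => 1
  | [], _ :: _ => 0
  | a :: x, b :: w => subseqCount x (b :: w) + if a = b then subseqCount x w else 0

@[simp] theorem subseqCount_nil_right (x : List α) : x.subseqCount [] = 1 := by
  cases x <;> rfl

@[simp] theorem nil_subseqCount_cons (b : α) (w : List α) : [].subseqCount (b :: w) = 0 := rfl

theorem cons_subseqCount_cons (a b : α) (x w : List α) :
    (a :: x).subseqCount (b :: w) =
      x.subseqCount (b :: w) + if a = b then x.subseqCount w else 0 :=
  rfl

theorem nil_subseqCount {w : List α} (hw : w ≠ []) : [].subseqCount w = 0 := by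
  cases w
  · exact absurd rfl hw
  · rfl

theorem subseqCount_append (u v w : List α) :
    (u ++ v).subseqCount w =
      ∑ j ∈ Finset.range (w.length + 1), u.subseqCount (w.take j) * v.subseqCount (w.drop j) := by
  induction u generalizing w with
  | nil =>
    rw [Finset.sum_eq_single 0 (fun j hj hj0 => ?_) (by simp)]
    · simp
    · have hw : w ≠ [] := by rintro rfl; simp_all
      rw [nil_subseqCount (by simp [List.take_eq_nil_iff, hj0, hw]), zero_mul]
  | cons a u ih =>
    cases w with
    | nil => simp
    | cons b w =>
      rw [cons_append, cons_subseqCount_cons, ih, ih, Finset.sum_range_succ',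
        Finset.sum_range_succ' _ (b :: w).length]
      split_ifs with hab
      · simp only [length_cons, take_succ_cons, drop_succ_cons, take_zero, subseqCount_nil_right,
          drop_zero, one_mul, hab, cons_subseqCount_cons, ↓reduceIte, add_mul,
          Finset.sum_add_distrib]
        ring
      · simp [cons_subseqCount_cons, hab]

theorem replicate_subseqCount (c : α) (t : ℕ) (w : List α) :
    (replicate t c).subseqCount w = if ∀ b ∈ w, b = c then t.choose w.length else 0 := by
  induction t generalizing w with
  | zero => cases w <;> simp
  | succ t ih =>
    cases w with
    | nil => simp
    | cons b w =>
      rw [replicate_succ, cons_subseqCount_cons, ih, ih]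
      by_cases hb : b = c
      · subst hb
        by_cases hw : ∀ d ∈ w, d = b
        · simp only [if_pos hw, forall_mem_cons, true_and, if_true, length_cons,
            Nat.choose_succ_succ', add_comm]
        · simp [hw]
      · simp [hb, Ne.symm hb]

end List

open Finset

section Deck

open Classical in
noncomputable def subseqEmbeddings {k : ℕ} (x : List Bool) (y : Fin k → Bool) :
    Finset (Fin k → Fin x.length) :=
  {f | StrictMono f ∧ ∀ j, x[f j] = y j}

theorem deck_eq_card_subseqEmbeddings (k : ℕ) (x : List Bool) (y : Fin k → Bool) :
    deck k x y = #(subseqEmbeddings x y) := by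
  unfold deck subseqEmbeddings
  congr 1

variable {k : ℕ} (a : Bool) (x : List Bool)

theorem card_subseqEmbeddings_cons_apply_zero_ne_zero (y : Fin (k + 1) → Bool) :
    #{f ∈ subseqEmbeddings (a :: x) y | f 0 ≠ 0} = #(subseqEmbeddings x y) := by
  have hne : ∀ f : Fin (k + 1) → Fin (x.length + 1), StrictMono f → f 0 ≠ 0 → ∀ j, f j ≠ 0 :=
    fun f hf h0 j hj => h0 (nonpos_iff_eq_zero.mp (hj ▸ hf.monotone (Fin.zero_le j)))
  simp only [subseqEmbeddings, filter_filter]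
  refine card_bij'
    (fun f hf j => (f j).pred (hne f (mem_filter.mp hf).2.1.1 (mem_filter.mp hf).2.2 j))
    (fun g _ => Fin.succ ∘ g) (fun f hf => ?_) (fun g hg => ?_) (fun f hf => ?_) (fun g hg => ?_)
  · simp only [mem_filter, mem_univ, true_and] at hf ⊢
    refine ⟨fun i j hij => Fin.pred_lt_pred_iff.mpr (hf.1.1 hij), fun j => ?_⟩
    simpa [List.getElem_cons, hne f hf.1.1 hf.2 j] using hf.1.2 j
  · simp only [mem_filter, mem_univ, true_and] at hg ⊢
    exact ⟨⟨Fin.strictMono_succ.comp hg.1, fun j => by simpa using hg.2 j⟩, Fin.succ_ne_zero _⟩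
  · funext j
    simp
  · funext j
    simp

theorem card_subseqEmbeddings_cons_apply_zero_eq_zero (y : Fin (k + 1) → Bool) :
    #{f ∈ subseqEmbeddings (a :: x) y | f 0 = 0} =
      if a = y 0 then #(subseqEmbeddings x (Fin.tail y)) else 0 := by
  simp only [subseqEmbeddings, filter_filter]
  split_ifs with hay
  · have hne : ∀ f : Fin (k + 1) → Fin (x.length + 1), StrictMono f → f 0 = 0 →
        ∀ j : Fin k, f j.succ ≠ 0 :=
      fun f hf h0 j hj => (hf (Fin.succ_pos j)).ne (h0.trans hj.symm)
    refine card_bij'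
      (fun f hf j => (f j.succ).pred (hne f (mem_filter.mp hf).2.1.1 (mem_filter.mp hf).2.2 j))
      (fun g _ => Fin.cons 0 (Fin.succ ∘ g)) (fun f hf => ?_) (fun g hg => ?_) (fun f hf => ?_)
      (fun g hg => ?_)
    · simp only [mem_filter, mem_univ, true_and] at hf ⊢
      refine ⟨fun i j hij => Fin.pred_lt_pred_iff.mpr (hf.1.1 (Fin.succ_lt_succ_iff.mpr hij)),
        fun j => ?_⟩
      simpa [List.getElem_cons, hne f hf.1.1 hf.2 j, Fin.tail] using hf.1.2 j.succ
    · simp only [mem_filter, mem_univ, true_and] at hg ⊢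
      refine ⟨⟨Fin.strictMono_cons.mpr ⟨fun j => Fin.succ_pos _, Fin.strictMono_succ.comp hg.1⟩,
        fun j => ?_⟩, rfl⟩
      cases j using Fin.cases
      · simpa using hay
      · simpa [Fin.tail] using hg.2 _
    · simp only [mem_filter, mem_univ, true_and] at hf
      funext j
      cases j using Fin.cases
      · simp [hf.2]
      · simp
    · funext j
      simp
  · rw [card_eq_zero, filter_eq_empty_iff]
    rintro f - ⟨⟨-, hy⟩, h0⟩
    exact hay (by simpa [h0] using hy 0)

theorem deck_cons (y : Fin (k + 1) → Bool) :
    deck (k + 1) (a :: x) y = deck (k + 1) x y + if a = y 0 then deck k x (Fin.tail y) else 0 := by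
  simp only [deck_eq_card_subseqEmbeddings]
  rw [← card_filter_add_card_filter_not (fun f => f 0 = 0),
    card_subseqEmbeddings_cons_apply_zero_eq_zero, card_subseqEmbeddings_cons_apply_zero_ne_zero,
    add_comm]

theorem deck_zero (y : Fin 0 → Bool) : deck 0 x y = 1 := by
  simp [deck]

theorem deck_nil (y : Fin (k + 1) → Bool) : deck (k + 1) [] y = 0 := by
  simp [deck]

theorem deck_eq_subseqCount (y : Fin k → Bool) : deck k x y = x.subseqCount (List.ofFn y) := by
  induction x generalizing k with
  | nil => cases k <;> simp [deck_zero, deck_nil]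
  | cons b x ih =>
    cases k with
    | zero => simp [deck_zero]
    | succ k =>
      rw [deck_cons, ih, ih, List.ofFn_succ, List.cons_subseqCount_cons]
      rfl

end Deck

open Polynomial

def block (t : ℕ) : List Bool := List.replicate t false ++ List.replicate t true

def blocks (t M : ℕ) : List Bool := (List.replicate M (block t)).flatten

theorem xt_eq_blocks (l t : ℕ) : xt l t = blocks t (l / (2 * t)) := rfl

@[simp] theorem blocks_zero (t : ℕ) : blocks t 0 = [] := rfl

theorem blocks_succ (t M : ℕ) : blocks t (M + 1) = block t ++ blocks t M := by
  rw [blocks, List.replicate_succ, List.flatten_cons, blocks]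

noncomputable def choosePoly (m : ℕ) : ℚ[X] := C (m.factorial : ℚ)⁻¹ * descPochhammer ℚ m

theorem choosePoly_eval_natCast (m t : ℕ) : (choosePoly m).eval (t : ℚ) = t.choose m := by
  rw [Nat.cast_choose_eq_descPochhammer_div, choosePoly, eval_mul, eval_C, inv_mul_eq_div]

theorem natDegree_choosePoly_le (m : ℕ) : (choosePoly m).natDegree ≤ m :=
  (natDegree_C_mul_le _ _).trans (descPochhammer_natDegree ℚ m).le

theorem exists_poly_block_subseqCount (z : List Bool) :
    ∃ e : ℚ[X], e.natDegree ≤ z.length ∧ ∀ t : ℕ, e.eval (t : ℚ) = (block t).subseqCount z := by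
  have hdeg (P : Prop) [Decidable P] (m : ℕ) : (if P then choosePoly m else 0).natDegree ≤ m := by
    split_ifs
    · exact natDegree_choosePoly_le m
    · simp
  refine ⟨∑ j ∈ range (z.length + 1),
    (if ∀ b ∈ z.take j, b = false then choosePoly j else 0) *
      (if ∀ b ∈ z.drop j, b = true then choosePoly (z.length - j) else 0), ?_, fun t => ?_⟩
  · refine natDegree_sum_le_of_forall_le _ _ fun j hj => natDegree_mul_le.trans ?_
    have := hdeg (∀ b ∈ z.take j, b = false) j
    have := hdeg (∀ b ∈ z.drop j, b = true) (z.length - j)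
    simp only [mem_range] at hj
    omega
  · rw [block, List.subseqCount_append, eval_finsetSum, Nat.cast_sum]
    refine sum_congr rfl fun j hj => ?_
    have hj : j ≤ z.length := Nat.lt_succ_iff.mp (mem_range.mp hj)
    simp only [List.replicate_subseqCount, List.length_take, List.length_drop, min_eq_left hj,
      eval_mul, apply_ite (eval (t : ℚ)), choosePoly_eval_natCast, eval_zero, Nat.cast_mul,
      Nat.cast_ite, Nat.cast_zero]

-- On `x^(t)`, made of `M` blocks, `t * M = l / 2`.
def monomialTM (i a : ℕ) : ℕ → ℕ → ℚ := fun t M => (t : ℚ) ^ i * (t * M) ^ a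

def monomialSpan (s : Set (ℕ × ℕ)) : Submodule ℚ (ℕ → ℕ → ℚ) :=
  Submodule.span ℚ ((fun p => monomialTM p.1 p.2) '' s)

theorem monomialTM_mem_monomialSpan {s : Set (ℕ × ℕ)} {i a : ℕ} (h : (i, a) ∈ s) :
    monomialTM i a ∈ monomialSpan s :=
  Submodule.subset_span ⟨_, h, rfl⟩

theorem monomialSpan_mono {s s' : Set (ℕ × ℕ)} (h : s ⊆ s') : monomialSpan s ≤ monomialSpan s' :=
  Submodule.span_mono (Set.image_mono h)

def partialSum : (ℕ → ℕ → ℚ) →ₗ[ℚ] (ℕ → ℕ → ℚ) where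
  toFun F t M := ∑ m ∈ range M, F t m
  map_add' F G := by
    funext t M
    simp [sum_add_distrib]
  map_smul' c F := by
    funext t M
    simp [mul_sum]

@[simp] theorem partialSum_apply (F : ℕ → ℕ → ℚ) (t M : ℕ) :
    partialSum F t M = ∑ m ∈ range M, F t m := rfl

theorem partialSum_monomialTM {i : ℕ} (hi : 1 ≤ i) (a : ℕ) :
    partialSum (monomialTM i a) = ∑ j ∈ range (a + 1),
      (_root_.bernoulli j * (a + 1).choose j / (a + 1) : ℚ) •
        monomialTM (i + j - 1) (a + 1 - j) := by
  funext t M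
  have hpow (m : ℕ) : (t : ℚ) ^ i * (t * m) ^ a = t ^ (i + a) * (m : ℚ) ^ a := by ring
  simp only [partialSum_apply, monomialTM, Finset.sum_apply, Pi.smul_apply, smul_eq_mul]
  rw [sum_congr rfl fun m _ => hpow m, ← mul_sum, sum_range_pow, mul_sum]
  refine sum_congr rfl fun j hj => ?_
  have hj : j ≤ a := Nat.lt_succ_iff.mp (mem_range.mp hj)
  rw [show (t : ℚ) ^ (i + a) = t ^ (i + j - 1) * t ^ (a + 1 - j) by
    rw [← pow_add]; congr 1; omega]
  ring

theorem partialSum_mem_monomialSpan {d : ℕ} {F : ℕ → ℕ → ℚ}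
    (hF : F ∈ monomialSpan {p | 1 ≤ p.1 ∧ p.1 + p.2 ≤ d}) :
    partialSum F ∈ monomialSpan {p | 1 ≤ p.2 ∧ p.1 + p.2 ≤ d} := by
  refine (Submodule.map_span_le _ _ _).mpr ?_ (Submodule.mem_map_of_mem hF)
  rintro _ ⟨⟨i, a⟩, ⟨hi, hd⟩, rfl⟩
  rw [partialSum_monomialTM hi]
  refine Submodule.sum_mem _ fun j hj => Submodule.smul_mem _ _ (monomialTM_mem_monomialSpan ?_)
  have hj : j ≤ a := Nat.lt_succ_iff.mp (mem_range.mp hj)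
  simp only [Set.mem_ofPred_eq] at hd ⊢
  omega

theorem eval_mul_mem_monomialSpan {e : ℚ[X]} {c d : ℕ} (he : e.natDegree ≤ c)
    (h0 : e.coeff 0 = 0) {F : ℕ → ℕ → ℚ} (hF : F ∈ monomialSpan {p | p.1 + p.2 ≤ d}) :
    (fun t M : ℕ => e.eval (t : ℚ) * F t M) ∈
      monomialSpan {p | 1 ≤ p.1 ∧ p.1 + p.2 ≤ c + d} := by
  rw [monomialSpan] at hF
  refine (Submodule.map_span_le (LinearMap.mulLeft ℚ fun (t _ : ℕ) => e.eval (t : ℚ)) _ _).mpr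
    ?_ (Submodule.mem_map_of_mem hF)
  rintro _ ⟨⟨i, a⟩, hd, rfl⟩
  have hsum : (fun (t _ : ℕ) => e.eval (t : ℚ)) * monomialTM i a =
      ∑ b ∈ range (c + 1), e.coeff b • monomialTM (b + i) a := by
    funext t M
    simp only [Pi.mul_apply, eval_eq_sum_range' (Nat.lt_succ_of_le he), sum_mul, monomialTM,
      Finset.sum_apply, Pi.smul_apply, smul_eq_mul, pow_add]
    refine sum_congr rfl fun b _ => by ring
  simp only [LinearMap.mulLeft_apply, hsum]
  refine Submodule.sum_mem _ fun b hb => ?_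
  rcases Nat.eq_zero_or_pos b with rfl | hb0
  · rw [h0, zero_smul]
    exact Submodule.zero_mem _
  · refine Submodule.smul_mem _ _ (monomialTM_mem_monomialSpan ?_)
    have hb : b ≤ c := Nat.lt_succ_iff.mp (mem_range.mp hb)
    simp only [Set.mem_ofPred_eq] at hd ⊢
    omega

def blockCount (w : List Bool) : ℕ → ℕ → ℚ := fun t M => (blocks t M).subseqCount w

theorem blockCount_nil : blockCount [] = monomialTM 0 0 := by
  funext t M
  simp [blockCount, monomialTM]

theorem blockCount_eq_partialSum {w : List Bool} (hw : w ≠ []) :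
    blockCount w = partialSum (∑ j ∈ Ico 1 (w.length + 1),
      fun t M : ℕ => ((block t).subseqCount (w.take j) : ℚ) * blockCount (w.drop j) t M) := by
  funext t M
  induction M with
  | zero => simp [blockCount, List.nil_subseqCount hw]
  | succ M ih =>
    rw [partialSum_apply, sum_range_succ, ← partialSum_apply, ← ih, blockCount, blocks_succ,
      List.subseqCount_append, range_eq_Ico, sum_eq_sum_Ico_succ_bot (Nat.succ_pos _)]
    simp [blockCount]

theorem blockCount_mem_monomialSpan_of_drop {w : List Bool} (hw : w ≠ [])
    (h : ∀ j ∈ Ico 1 (w.length + 1),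
      blockCount (w.drop j) ∈ monomialSpan {p | p.1 + p.2 ≤ w.length - j}) :
    blockCount w ∈ monomialSpan {p | 1 ≤ p.2 ∧ p.1 + p.2 ≤ w.length} := by
  rw [blockCount_eq_partialSum hw]
  refine partialSum_mem_monomialSpan (Submodule.sum_mem _ fun j hj => ?_)
  obtain ⟨e, he, hev⟩ := exists_poly_block_subseqCount (w.take j)
  have hj' := mem_Ico.mp hj
  have htake : (w.take j).length = j := List.length_take_of_le (by omega)
  have h0 : e.coeff 0 = 0 := by
    rw [coeff_zero_eq_eval_zero, ← Nat.cast_zero, hev, block]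
    exact_mod_cast List.nil_subseqCount (by simpa [List.take_eq_nil_iff] using ⟨by omega, hw⟩)
  have := eval_mul_mem_monomialSpan (htake ▸ he) h0 (h j hj)
  rw [show j + (w.length - j) = w.length by omega] at this
  simpa only [← hev] using this

theorem blockCount_mem_monomialSpan (w : List Bool) :
    blockCount w ∈ monomialSpan {p | p.1 + p.2 ≤ w.length} := by
  rcases eq_or_ne w [] with rfl | hw
  · rw [blockCount_nil]
    exact monomialTM_mem_monomialSpan (by simp)
  · refine monomialSpan_mono (fun p hp => hp.2)
      (blockCount_mem_monomialSpan_of_drop hw fun j hj => ?_)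
    simpa using blockCount_mem_monomialSpan (w.drop j)
termination_by w.length
decreasing_by
  have := mem_Ico.mp hj
  simp only [List.length_drop]
  omega

theorem blockCount_mem_monomialSpan_of_ne_nil {w : List Bool} (hw : w ≠ []) :
    blockCount w ∈ monomialSpan {p | 1 ≤ p.2 ∧ p.1 + p.2 ≤ w.length} :=
  blockCount_mem_monomialSpan_of_drop hw fun j _ => by
    simpa using blockCount_mem_monomialSpan (w.drop j)

theorem exists_eq_sum_of_mem_monomialSpan {k : ℕ} {F : ℕ → ℕ → ℚ}
    (hF : F ∈ monomialSpan {p | 1 ≤ p.2 ∧ p.1 + p.2 ≤ k}) :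
    ∃ f : Fin k → ℚ[X], ∀ t M : ℕ,
      F t M = ∑ i : Fin k, (t : ℚ) ^ (i : ℕ) * (f i).eval ((2 * t * M : ℕ) : ℚ) := by
  induction hF using Submodule.span_induction with
  | mem F hF =>
    obtain ⟨⟨i, a⟩, ⟨ha, hd⟩, rfl⟩ := hF
    refine ⟨Pi.single ⟨i, by omega⟩ ((C (1 / 2 : ℚ) * X) ^ a), fun t M => ?_⟩
    rw [Fintype.sum_eq_single ⟨i, by omega⟩ fun j hj => by simp [hj], Pi.single_eq_same]
    simp only [monomialTM, eval_pow, eval_mul, eval_C, eval_X, Nat.cast_mul, Nat.cast_ofNat]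
    ring
  | zero => exact ⟨0, fun t M => by simp⟩
  | add F G _ _ hF hG =>
    obtain ⟨f, hf⟩ := hF
    obtain ⟨g, hg⟩ := hG
    exact ⟨f + g, fun t M => by simp [hf, hg, mul_add, sum_add_distrib]⟩
  | smul c F _ hF =>
    obtain ⟨f, hf⟩ := hF
    exact ⟨c • f, fun t M => by simp [hf, mul_sum, mul_left_comm]⟩

/-- For fixed `k ≥ 1` and pattern `y ∈ {0,1}^k`, the `k`-deck count
`K_k(x^(t))_y` equals `∑_{i=0}^{k-1} t^i f_{y,i}(l)` for polynomials `f_{y,i}`. -/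
theorem stmt15 (k : ℕ) (hk : 1 ≤ k) (y : Fin k → Bool) :
    ∃ f : Fin k → Polynomial ℚ, ∀ l t : ℕ, 0 < t → 2 * t ∣ l →
      (deck k (xt l t) y : ℚ) =
        ∑ i : Fin k, (t : ℚ) ^ (i : ℕ) * (f i).eval (l : ℚ) := by
  have hy : List.ofFn y ≠ [] := List.ofFn_eq_nil_iff.not.mpr (by omega)
  obtain ⟨f, hf⟩ := exists_eq_sum_of_mem_monomialSpan
    (List.length_ofFn (f := y) ▸ blockCount_mem_monomialSpan_of_ne_nil hy)
  refine ⟨f, fun l t _ hl => ?_⟩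
  have := hf t (l / (2 * t))
  rw [Nat.mul_div_cancel' hl] at this
  rwa [deck_eq_subseqCount, xt_eq_blocks]
end

section
/- Let V be the k x k Vandermonde matrix with entries V_{i,j} = r_j^i for i,j in {0,...,k-1}, where r_0 < r_1 < ... < r_{k-1} are distinct reals. Then V is invertible and the entries of its inverse are given by V^{-1}_{i,j} = (-1)^j * e^{(i)}_{k-1-j} / prod_{s != i} (r_s - r_i), where e^{(i)}_d denotes the d-th elementary symmetric polynomial in the k-1 variables {r_s : s != i}. -/
/-!
Row `i` of the inverse of the transposed Vandermonde matrix holds the coefficients of the Lagrange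
basis polynomial `Lᵢ = ∏_{s ≠ i} (X - r_s) / (r_i - r_s)`, since multiplying that row by column `j`
evaluates `Lᵢ` at `r_j`. By Vieta, the coefficient of `X^m` in `∏_{s ≠ i} (X - r_s)` is
`(-1)^(k-1-m) e^{(i)}_{k-1-m}`, and flipping the signs of the `k - 1` factors `r_i - r_s` turns
`(-1)^(k-1-m)` into `(-1)^m`.
-/

open Polynomial Finset
open scoped Matrix

namespace Lagrange

variable {F ι : Type*} [Field F]

theorem coeff_nodal (s : Finset ι) (v : ι → F) {m : ℕ} (hm : m ≤ #s) :
    (nodal s v).coeff m = (-1) ^ (#s - m) * (s.val.map v).esymm (#s - m) := by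
  have := Multiset.prod_X_sub_C_coeff (s.val.map v) (k := m) (by simpa using hm)
  rwa [Multiset.map_map, Multiset.card_map, card_val] at this

variable [DecidableEq ι]

theorem basis_eq_C_nodalWeight_mul_nodal_erase (s : Finset ι) (v : ι → F) (i : ι) :
    Lagrange.basis s v i = C (nodalWeight s v i) * nodal (s.erase i) v := by
  simp_rw [Lagrange.basis, basisDivisor, nodalWeight, prod_mul_distrib, map_prod, nodal]

theorem coeff_basis {s : Finset ι} {v : ι → F} {i : ι} (hi : i ∈ s) {m : ℕ} (hm : m < #s) :
    (Lagrange.basis s v i).coeff m =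
      (-1) ^ m * ((s.erase i).val.map v).esymm (#s - 1 - m) / ∏ j ∈ s.erase i, (v j - v i) := by
  have hcard : #(s.erase i) = #s - 1 := card_erase_of_mem hi
  have hsign : ∏ j ∈ s.erase i, (v i - v j) =
      (-1) ^ (#s - 1 - m) * (-1) ^ m * ∏ j ∈ s.erase i, (v j - v i) := by
    rw [← pow_add, Nat.sub_add_cancel (by omega), ← hcard, ← prod_neg]
    simp_rw [neg_sub]
  have hsq : ((-1 : F) ^ (#s - 1 - m)) * (-1) ^ (#s - 1 - m) = 1 := by
    rw [← mul_pow, neg_one_mul, neg_neg, one_pow]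
  rw [basis_eq_C_nodalWeight_mul_nodal_erase, coeff_C_mul, coeff_nodal _ _ (by omega), hcard,
    nodalWeight, prod_inv_distrib, hsign, mul_inv, mul_inv, ← inv_pow, ← inv_pow, inv_neg_one]
  linear_combination ((-1) ^ m * ((s.erase i).val.map v).esymm (#s - 1 - m) /
    ∏ j ∈ s.erase i, (v j - v i)) * hsq

end Lagrange

namespace Matrix

theorem inv_vandermonde_transpose {F : Type*} [Field F] {k : ℕ} {v : Fin k → F}
    (hv : Function.Injective v) :
    (vandermonde v)ᵀ⁻¹ = of fun i m : Fin k => (Lagrange.basis univ v i).coeff m := by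
  refine inv_eq_left_inv ?_
  ext i j
  have hdeg : (Lagrange.basis univ v i).natDegree < k := by
    rw [Lagrange.natDegree_basis hv.injOn (mem_univ i), card_univ, Fintype.card_fin]
    exact Nat.sub_lt i.pos one_pos
  rw [mul_apply, one_apply]
  simp only [of_apply, transpose_apply, vandermonde_apply]
  rw [Fin.sum_univ_eq_sum_range (fun m => (Lagrange.basis univ v i).coeff m * v j ^ m),
    ← eval_eq_sum_range' hdeg]
  split_ifs with hij
  · rw [hij, Lagrange.eval_basis_self hv.injOn (mem_univ j)]
  · exact Lagrange.eval_basis_of_ne hij (mem_univ j)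

end Matrix

/-- Explicit inverse of the Vandermonde matrix `V_{i,j} = r_j^i` with distinct
nodes `r_0 < r_1 < ⋯ < r_{k-1}`: `V` is invertible and
`V⁻¹_{i,j} = (-1)^j e^{(i)}_{k-1-j} / ∏_{s ≠ i} (r_s - r_i)`, where `e^{(i)}_d`
is the `d`-th elementary symmetric polynomial in the variables `{r_s : s ≠ i}`. -/
theorem stmt16 (k : ℕ) (r : Fin k → ℝ) (hr : StrictMono r) :
    IsUnit (Matrix.of fun i j : Fin k => r j ^ (i : ℕ)) ∧
    ∀ i j : Fin k,
      (Matrix.of fun i j : Fin k => r j ^ (i : ℕ))⁻¹ i j =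
        (-1) ^ (j : ℕ) * (((Finset.univ.erase i).val.map r).esymm (k - 1 - (j : ℕ))) /
          ∏ s ∈ Finset.univ.erase i, (r s - r i) := by
  have hV : (Matrix.of fun i j : Fin k => r j ^ (i : ℕ)) = (Matrix.vandermonde r)ᵀ := rfl
  rw [hV, Matrix.inv_vandermonde_transpose hr.injective, Matrix.isUnit_transpose,
    Matrix.isUnit_iff_isUnit_det, isUnit_iff_ne_zero, Matrix.det_vandermonde_ne_zero_iff]
  refine ⟨hr.injective, fun i j => ?_⟩
  rw [Matrix.of_apply, Lagrange.coeff_basis (mem_univ i) (by simp), card_univ, Fintype.card_fin]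
end

section
/- Let delta in (0,1/2] and consider the random variable L = |y| + sum_{i=1}^{|y|} (d_i - 1)/2 where |y| ~ Bin(n, 1-delta) and, conditioned on |y|, d_1,...,d_{|y|} are i.i.d. Geometric(1 - delta^2). Then E[L] = (1-delta) * n * (1 + delta^2 / (2(1 - delta^2))) = (1 - delta + delta^2/(2(1-delta^2)) - delta^3/(2(1-delta^2))) * n >= (1 - delta + delta^2/2 - delta^3/2 + delta^4/2 - delta^5/2) * n. -/
/-!
Up to a null set, `Ω` is partitioned by the events `N = k, dᵢ = mᵢ + 1 (i < k)`: their
probabilities, read off the law, sum to one. On such an event the integrand equals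
`∑ᵢ (1 + mᵢ / 2)`, so the expectation is a sum over the events, and it factors. Given `N = k`,
linearity over the `k` i.i.d. geometric coordinates gives `k (1 + q / (2 (1 - q)))` with
`q = δ²`, and the binomial mean of `N` is `n (1 - δ)`. The lower bound is the identity
`(1 - δ) (1 + δ² / (2 (1 - δ²))) = 1 - δ + δ²/2 - δ³/2 + δ⁴/2 - δ⁵/2 + δ⁶ / (2 (1 + δ))`.
-/

open MeasureTheory Finset
open scoped ENNReal

namespace ENNReal

theorem tsum_fin_pi_prod {β : Type*} {k : ℕ} (f : Fin k → β → ℝ≥0∞) :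
    ∑' m : Fin k → β, ∏ i, f i (m i) = ∏ i, ∑' b, f i b := by
  induction k with
  | zero => simp
  | succ k ih =>
    rw [← (Fin.consEquiv fun _ => β).tsum_eq, ENNReal.tsum_prod']
    simp [Fin.prod_univ_succ, Fin.consEquiv, ENNReal.tsum_mul_left, ENNReal.tsum_mul_right, ih]

theorem tsum_sum_mul_prod_of_tsum_eq_one {β : Type*} {k : ℕ} {w : β → ℝ≥0∞}
    (hw : ∑' b, w b = 1) (h : β → ℝ≥0∞) :
    ∑' m : Fin k → β, (∑ i, h (m i)) * ∏ i, w (m i) = k * ∑' b, h b * w b := by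
  classical
  have hcoord (i : Fin k) : ∑' m : Fin k → β, h (m i) * ∏ j, w (m j) = ∑' b, h b * w b := by
    set f : Fin k → β → ℝ≥0∞ := Function.update (fun _ => w) i fun b => h b * w b
    have hf (m : Fin k → β) : h (m i) * ∏ j, w (m j) = ∏ j, f j (m j) := by
      rw [Fintype.prod_eq_mul_prod_compl i, Fintype.prod_eq_mul_prod_compl i, ← mul_assoc]
      congr 1
      · simp [f]
      · exact Finset.prod_congr rfl fun j hj => by
          simp [f, Function.update_of_ne (by simpa using hj : j ≠ i)]
    rw [tsum_congr hf, tsum_fin_pi_prod, Fintype.prod_eq_single i fun j hj => by simp [f, hj, hw]]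
    simp [f]
  simp_rw [Finset.sum_mul]
  rw [Summable.tsum_finsetSum fun _ _ => ENNReal.summable]
  simp [hcoord]

theorem tsum_ofReal_geometric_mul_one_sub {q : ℝ} (h0 : 0 ≤ q) (h1 : q < 1) :
    ∑' t : ℕ, ENNReal.ofReal (q ^ t * (1 - q)) = 1 := by
  rw [← ENNReal.ofReal_tsum_of_nonneg (fun t => mul_nonneg (pow_nonneg h0 t) (by linarith))
      ((summable_geometric_of_lt_one h0 h1).mul_right _), tsum_mul_right,
    tsum_geometric_of_lt_one h0 h1, inv_mul_cancel₀ (by linarith), ENNReal.ofReal_one]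

theorem tsum_natCast_mul_ofReal_geometric_mul_one_sub {q : ℝ} (h0 : 0 ≤ q) (h1 : q < 1) :
    ∑' t : ℕ, (t : ℝ≥0∞) * ENNReal.ofReal (q ^ t * (1 - q)) = ENNReal.ofReal (q / (1 - q)) := by
  have hq : ‖q‖ < 1 := by rwa [Real.norm_eq_abs, abs_of_nonneg h0]
  have hsum : Summable fun t : ℕ => (t : ℝ) * q ^ t * (1 - q) := by
    simpa using (summable_pow_mul_geometric_of_norm_lt_one (R := ℝ) 1 hq).mul_right (1 - q)
  have hnonneg (t : ℕ) : 0 ≤ (t : ℝ) * q ^ t * (1 - q) := by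
    have := pow_nonneg h0 t; have : 0 ≤ 1 - q := by linarith
    positivity
  simp_rw [← ENNReal.ofReal_natCast, ← ENNReal.ofReal_mul (Nat.cast_nonneg _), ← mul_assoc]
  rw [← ENNReal.ofReal_tsum_of_nonneg hnonneg hsum, tsum_mul_right,
    tsum_coe_mul_geometric_of_norm_lt_one hq]
  congr 1
  field_simp [show (1 : ℝ) - q ≠ 0 by linarith]

theorem tsum_ofReal_choose_mul_pow {x : ℝ} (h0 : 0 ≤ x) (h1 : x ≤ 1) (n : ℕ) :
    ∑' k, ENNReal.ofReal (n.choose k * x ^ k * (1 - x) ^ (n - k)) = 1 := by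
  rw [tsum_eq_sum (s := range (n + 1)) fun k hk => by
      simp [Nat.choose_eq_zero_of_lt (by simpa using hk : n < k)],
    ← ENNReal.ofReal_sum_of_nonneg fun k _ => by
      have := pow_nonneg (sub_nonneg.mpr h1) (n - k); positivity]
  simpa [bernsteinPolynomial, Polynomial.eval_finsetSum] using
    congr_arg (Polynomial.eval x) (bernsteinPolynomial.sum ℝ n)

theorem tsum_natCast_mul_ofReal_choose_mul_pow {x : ℝ} (h0 : 0 ≤ x) (h1 : x ≤ 1) (n : ℕ) :
    ∑' k : ℕ, (k : ℝ≥0∞) * ENNReal.ofReal (n.choose k * x ^ k * (1 - x) ^ (n - k)) =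
      ENNReal.ofReal (n * x) := by
  simp_rw [← ENNReal.ofReal_natCast, ← ENNReal.ofReal_mul (Nat.cast_nonneg _)]
  rw [tsum_eq_sum (s := range (n + 1)) fun k hk => by
      simp [Nat.choose_eq_zero_of_lt (by simpa using hk : n < k)],
    ← ENNReal.ofReal_sum_of_nonneg fun k _ => by
      have := pow_nonneg (sub_nonneg.mpr h1) (n - k); positivity]
  congr 1
  simpa [bernsteinPolynomial, Polynomial.eval_finsetSum, mul_assoc] using
    congr_arg (Polynomial.eval x) (bernsteinPolynomial.sum_smul ℝ n)

end ENNReal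

section

variable {Ω ι : Type*} [MeasurableSpace Ω] [Countable ι] {μ : Measure Ω} {A : ι → Set Ω}

theorem ae_mem_iUnion_of_tsum_measure_eq_one [IsProbabilityMeasure μ]
    (hA : ∀ i, MeasurableSet (A i)) (hdisj : Pairwise (Function.onFun Disjoint A))
    (h : ∑' i, μ (A i) = 1) : ∀ᵐ ω ∂μ, ω ∈ ⋃ i, A i := by
  rw [← measure_iUnion hdisj hA, ← prob_compl_eq_zero_iff (.iUnion hA), ← mem_ae_iff] at h
  exact h

theorem lintegral_eq_tsum_of_ae_mem_iUnion (hA : ∀ i, MeasurableSet (A i))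
    (hdisj : Pairwise (Function.onFun Disjoint A)) (hcover : ∀ᵐ ω ∂μ, ω ∈ ⋃ i, A i)
    {f : Ω → ℝ≥0∞} {c : ι → ℝ≥0∞} (hf : ∀ i, ∀ ω ∈ A i, f ω = c i) :
    ∫⁻ ω, f ω ∂μ = ∑' i, c i * μ (A i) := calc
  ∫⁻ ω, f ω ∂μ = ∫⁻ ω in ⋃ i, A i, f ω ∂μ := by rw [Measure.restrict_eq_self_of_ae_mem hcover]
  _ = ∑' i, c i * μ (A i) := by
    rw [lintegral_iUnion hA hdisj]
    exact tsum_congr fun i => (setLIntegral_congr_fun (hA i) (hf i)).trans (setLIntegral_const _ _)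

end

section TraceModel

variable {Ω : Type*}

noncomputable def lcsGuarantee (N : Ω → ℕ) (d : ℕ → Ω → ℕ) (ω : Ω) : ℝ :=
  N ω + ∑ i ∈ range (N ω), ((d i ω : ℝ) - 1) / 2

theorem lcsGuarantee_nonneg (N : Ω → ℕ) (d : ℕ → Ω → ℕ) (ω : Ω) : 0 ≤ lcsGuarantee N d ω := by
  have h : lcsGuarantee N d ω = ∑ i ∈ range (N ω), ((d i ω : ℝ) + 1) / 2 := by
    simp only [lcsGuarantee, ← Finset.sum_div]
    rw [Finset.sum_add_distrib]
    simp only [sum_sub_distrib, sum_const, card_range, nsmul_eq_mul, mul_one]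
    ring
  rw [h]
  positivity

theorem measurable_lcsGuarantee [MeasurableSpace Ω] {N : Ω → ℕ} {d : ℕ → Ω → ℕ} (hN : Measurable N)
    (hd : ∀ i, Measurable (d i)) : Measurable (lcsGuarantee N d) := by
  let F : Ω × ℕ → ℝ := fun p => p.2 + ∑ i ∈ range p.2, ((d i p.1 : ℝ) - 1) / 2
  have hF : Measurable F := measurable_from_prod_countable_left fun k => by
    simp only [F]
    fun_prop
  exact hF.comp (measurable_id.prodMk hN)

/-- The shift `dᵢ = mᵢ + 1` lets `m` range over all of `Fin k → ℕ`. -/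
def traceAtom (N : Ω → ℕ) (d : ℕ → Ω → ℕ) (σ : Σ k : ℕ, Fin k → ℕ) : Set Ω :=
  {ω | N ω = σ.1 ∧ ∀ i : Fin σ.1, d i ω = σ.2 i + 1}

theorem measurableSet_traceAtom [MeasurableSpace Ω] {N : Ω → ℕ} {d : ℕ → Ω → ℕ} (hN : Measurable N)
    (hd : ∀ i, Measurable (d i)) (σ : Σ k : ℕ, Fin k → ℕ) : MeasurableSet (traceAtom N d σ) := by
  simp only [traceAtom, Set.ofPred_and, Set.ofPred_forall]
  exact (hN (measurableSet_singleton _)).inter (.iInter fun i => hd i (measurableSet_singleton _))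

theorem pairwise_disjoint_traceAtom (N : Ω → ℕ) (d : ℕ → Ω → ℕ) :
    Pairwise (Function.onFun Disjoint (traceAtom N d)) := by
  rintro ⟨k, m⟩ ⟨k', m'⟩ hne
  refine Set.disjoint_left.mpr fun ω ⟨hk, hm⟩ ⟨hk', hm'⟩ => hne ?_
  obtain rfl : k = k' := hk.symm.trans hk'
  congr
  funext i
  exact Nat.succ_injective ((hm i).symm.trans (hm' i))

theorem ofReal_lcsGuarantee_of_mem_traceAtom {N : Ω → ℕ} {d : ℕ → Ω → ℕ} {k : ℕ}
    {m : Fin k → ℕ} {ω : Ω} (hω : ω ∈ traceAtom N d ⟨k, m⟩) :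
    ENNReal.ofReal (lcsGuarantee N d ω) = ∑ i, (1 + (m i : ℝ≥0∞) / 2) := by
  obtain ⟨hk, hm⟩ := hω
  have h : lcsGuarantee N d ω = ∑ i, (1 + (m i : ℝ) / 2) := by
    simp only [lcsGuarantee, hk, Finset.sum_add_distrib]
    rw [← Fin.sum_univ_eq_sum_range (fun i => ((d i ω : ℝ) - 1) / 2)]
    simp [hm]
  rw [h, ENNReal.ofReal_sum_of_nonneg fun i _ => by positivity]
  refine Finset.sum_congr rfl fun i _ => ?_
  rw [ENNReal.ofReal_add zero_le_one (by positivity), ENNReal.ofReal_one,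
    ENNReal.ofReal_div_of_pos two_pos, ENNReal.ofReal_natCast, ENNReal.ofReal_ofNat]

end TraceModel

def HasBinomialGeometricLaw {Ω : Type*} [MeasurableSpace Ω] (μ : Measure Ω) (N : Ω → ℕ)
    (d : ℕ → Ω → ℕ) (n : ℕ) (δ : ℝ) : Prop :=
  ∀ (k : ℕ) (j : ℕ → ℕ), (∀ i, i < k → 1 ≤ j i) →
    μ {ω | N ω = k ∧ ∀ i, i < k → d i ω = j i} =
      ENNReal.ofReal ((n.choose k : ℝ) * (1 - δ) ^ k * δ ^ (n - k) *
        ∏ i ∈ Finset.range k, ((δ ^ 2) ^ (j i - 1) * (1 - δ ^ 2)))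

section Law

variable {Ω : Type*} [MeasurableSpace Ω] {μ : Measure Ω} {N : Ω → ℕ} {d : ℕ → Ω → ℕ}
  {n : ℕ} {δ : ℝ}

theorem measure_traceAtom (hδ0 : 0 ≤ δ) (hδ1 : δ ≤ 1) (hlaw : HasBinomialGeometricLaw μ N d n δ)
    (k : ℕ) (m : Fin k → ℕ) :
    μ (traceAtom N d ⟨k, m⟩) = ENNReal.ofReal (n.choose k * (1 - δ) ^ k * δ ^ (n - k)) *
      ∏ i, ENNReal.ofReal ((δ ^ 2) ^ m i * (1 - δ ^ 2)) := by
  let j : ℕ → ℕ := fun i => if h : i < k then m ⟨i, h⟩ + 1 else 1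
  have hset : traceAtom N d ⟨k, m⟩ = {ω | N ω = k ∧ ∀ i, i < k → d i ω = j i} := by
    ext ω
    simp +contextual [traceAtom, j, Fin.forall_iff]
  have hprod : ∏ i ∈ range k, ((δ ^ 2) ^ (j i - 1) * (1 - δ ^ 2)) =
      ∏ i : Fin k, (δ ^ 2) ^ m i * (1 - δ ^ 2) := by
    rw [← Fin.prod_univ_eq_prod_range]
    simp [j]
  have hsq : 0 ≤ 1 - δ ^ 2 := by nlinarith
  rw [hset, hlaw k j fun i hi => by simp [j, hi], hprod,
    ENNReal.ofReal_mul (by have := sub_nonneg.mpr hδ1; positivity),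
    ENNReal.ofReal_prod_of_nonneg fun i _ => by positivity]

theorem tsum_measure_traceAtom (hδ0 : 0 ≤ δ) (hδ1 : δ < 1)
    (hlaw : HasBinomialGeometricLaw μ N d n δ) : ∑' σ, μ (traceAtom N d σ) = 1 := by
  have hq1 : δ ^ 2 < 1 := by nlinarith
  rw [ENNReal.tsum_sigma']
  simp_rw [measure_traceAtom hδ0 hδ1.le hlaw, ENNReal.tsum_mul_left,
    ENNReal.tsum_fin_pi_prod fun _ t => ENNReal.ofReal ((δ ^ 2) ^ t * (1 - δ ^ 2)),
    ENNReal.tsum_ofReal_geometric_mul_one_sub (sq_nonneg δ) hq1, prod_const_one, mul_one]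
  simpa using ENNReal.tsum_ofReal_choose_mul_pow (x := 1 - δ) (by linarith) (by linarith) n

theorem tsum_sum_mul_measure_traceAtom (hδ0 : 0 ≤ δ) (hδ1 : δ < 1)
    (hlaw : HasBinomialGeometricLaw μ N d n δ) (h : ℕ → ℝ≥0∞) :
    ∑' σ : Σ k : ℕ, Fin k → ℕ, (∑ i, h (σ.2 i)) * μ (traceAtom N d σ) =
      ENNReal.ofReal (n * (1 - δ)) * ∑' t, h t * ENNReal.ofReal ((δ ^ 2) ^ t * (1 - δ ^ 2)) := by
  have hq1 : δ ^ 2 < 1 := by nlinarith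
  rw [ENNReal.tsum_sigma']
  simp_rw [measure_traceAtom hδ0 hδ1.le hlaw, mul_left_comm _ (ENNReal.ofReal _),
    ENNReal.tsum_mul_left, ENNReal.tsum_sum_mul_prod_of_tsum_eq_one
      (ENNReal.tsum_ofReal_geometric_mul_one_sub (sq_nonneg δ) hq1), ← mul_assoc,
    ENNReal.tsum_mul_right, mul_comm (ENNReal.ofReal _) (Nat.cast _)]
  rw [← ENNReal.tsum_natCast_mul_ofReal_choose_mul_pow (x := 1 - δ) (by linarith) (by linarith) n]
  simp

theorem integral_lcsGuarantee [IsProbabilityMeasure μ] (hN : Measurable N)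
    (hd : ∀ i, Measurable (d i)) (hδ0 : 0 ≤ δ) (hδ1 : δ < 1)
    (hlaw : HasBinomialGeometricLaw μ N d n δ) :
    ∫ ω, lcsGuarantee N d ω ∂μ = (1 - δ) * n * (1 + δ ^ 2 / (2 * (1 - δ ^ 2))) := by
  have hq1 : δ ^ 2 < 1 := by nlinarith
  have hq : 0 < 1 - δ ^ 2 := by linarith
  have hδ : 0 ≤ 1 - δ := by linarith
  have hmean : ∑' t : ℕ, (1 + (t : ℝ≥0∞) / 2) * ENNReal.ofReal ((δ ^ 2) ^ t * (1 - δ ^ 2)) =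
      ENNReal.ofReal (1 + δ ^ 2 / (1 - δ ^ 2) * 2⁻¹) := by
    simp_rw [add_mul, one_mul, div_eq_mul_inv, mul_right_comm _ (2 : ℝ≥0∞)⁻¹]
    rw [ENNReal.tsum_add, ENNReal.tsum_mul_right,
      ENNReal.tsum_ofReal_geometric_mul_one_sub (sq_nonneg δ) hq1,
      ENNReal.tsum_natCast_mul_ofReal_geometric_mul_one_sub (sq_nonneg δ) hq1,
      ENNReal.ofReal_add zero_le_one (by positivity), ENNReal.ofReal_one, ENNReal.ofReal_mul
        (by positivity), ENNReal.ofReal_inv_of_pos two_pos, ENNReal.ofReal_ofNat,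
      div_eq_mul_inv]
  have hatoms := measurableSet_traceAtom hN hd
  have hdisj := pairwise_disjoint_traceAtom N d
  rw [integral_eq_lintegral_of_nonneg_ae (ae_of_all _ (lcsGuarantee_nonneg N d))
      (measurable_lcsGuarantee hN hd).aestronglyMeasurable,
    lintegral_eq_tsum_of_ae_mem_iUnion hatoms hdisj
      (ae_mem_iUnion_of_tsum_measure_eq_one hatoms hdisj (tsum_measure_traceAtom hδ0 hδ1 hlaw))
      fun σ _ => ofReal_lcsGuarantee_of_mem_traceAtom (k := σ.1) (m := σ.2),
    tsum_sum_mul_measure_traceAtom hδ0 hδ1 hlaw fun t => 1 + (t : ℝ≥0∞) / 2, hmean,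
    ← ENNReal.ofReal_mul (by positivity), ENNReal.toReal_ofReal (by positivity)]
  field_simp

end Law

theorem quintic_le_one_sub_mul_one_add_sq_div {δ : ℝ} (hδ0 : 0 ≤ δ) (hδ1 : δ < 1) :
    1 - δ + δ ^ 2 / 2 - δ ^ 3 / 2 + δ ^ 4 / 2 - δ ^ 5 / 2 ≤
      (1 - δ) * (1 + δ ^ 2 / (2 * (1 - δ ^ 2))) := by
  have hgap : (1 - δ) * (1 + δ ^ 2 / (2 * (1 - δ ^ 2))) =
      1 - δ + δ ^ 2 / 2 - δ ^ 3 / 2 + δ ^ 4 / 2 - δ ^ 5 / 2 + δ ^ 6 / (2 * (1 + δ)) := by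
    have : 1 - δ ^ 2 ≠ 0 := by nlinarith
    field_simp
    ring
  rw [hgap]
  have : 0 ≤ δ ^ 6 / (2 * (1 + δ)) := by positivity
  linarith

/-- Let `L = N + ∑_{i<N} (dᵢ - 1)/2` where `N ~ Bin(n, 1-δ)` and, conditioned on
`N`, `d₁, …, d_N` are i.i.d. `Geometric(1-δ²)` (on `{1,2,…}`).  Then
`E[L] = (1-δ) n (1 + δ²/(2(1-δ²))) = (1 - δ + δ²/(2(1-δ²)) - δ³/(2(1-δ²))) n`
`     ≥ (1 - δ + δ²/2 - δ³/2 + δ⁴/2 - δ⁵/2) n`. -/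
theorem stmt18 (δ : ℝ) (hδ0 : 0 < δ) (hδ1 : δ ≤ 1 / 2) (n : ℕ)
    (Ω : Type) [MeasurableSpace Ω] (μ : Measure Ω) [IsProbabilityMeasure μ]
    (N : Ω → ℕ) (d : ℕ → Ω → ℕ) (hN : Measurable N) (hd : ∀ i, Measurable (d i))
    (hlaw : ∀ (k : ℕ) (j : ℕ → ℕ), (∀ i, i < k → 1 ≤ j i) →
      μ {ω | N ω = k ∧ ∀ i, i < k → d i ω = j i} =
        ENNReal.ofReal ((n.choose k : ℝ) * (1 - δ) ^ k * δ ^ (n - k) *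
          ∏ i ∈ Finset.range k, ((δ ^ 2) ^ (j i - 1) * (1 - δ ^ 2)))) :
    (∫ ω, ((N ω : ℝ) + ∑ i ∈ Finset.range (N ω), ((d i ω : ℝ) - 1) / 2) ∂μ)
        = (1 - δ) * n * (1 + δ ^ 2 / (2 * (1 - δ ^ 2))) ∧
    (1 - δ) * n * (1 + δ ^ 2 / (2 * (1 - δ ^ 2)))
        = (1 - δ + δ ^ 2 / (2 * (1 - δ ^ 2)) - δ ^ 3 / (2 * (1 - δ ^ 2))) * n ∧
    (1 - δ + δ ^ 2 / 2 - δ ^ 3 / 2 + δ ^ 4 / 2 - δ ^ 5 / 2) * n ≤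
      (∫ ω, ((N ω : ℝ) + ∑ i ∈ Finset.range (N ω), ((d i ω : ℝ) - 1) / 2) ∂μ) := by
  have hδ1' : δ < 1 := by linarith
  have hE : ∫ ω, lcsGuarantee N d ω ∂μ = (1 - δ) * n * (1 + δ ^ 2 / (2 * (1 - δ ^ 2))) :=
    integral_lcsGuarantee hN hd hδ0.le hδ1' hlaw
  refine ⟨hE, ?_, ?_⟩
  · have : 1 - δ ^ 2 ≠ 0 := by nlinarith
    field_simp
    ring
  · change _ ≤ ∫ ω, lcsGuarantee N d ω ∂μ
    rw [hE, mul_right_comm]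
    exact mul_le_mul_of_nonneg_right
      (quintic_le_one_sub_mul_one_add_sq_div hδ0.le hδ1') n.cast_nonneg
end
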